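/- arXiv:2202.00627 — 7 statements merged into one kernel-verified Lean document; each statement's English description precedes it below -/
import Mathlib

section
/- For any integer n ≥ 2, the maximum of the product m₁⋯m_k over all k ≤ n and all positive integers m₁,…,m_k with m₁+⋯+m_k = n equals 3^(n/3) if n ≡ 0 (mod 3), equals 4·3^((n-4)/3) if n ≡ 1 (mod 3), and equals 2·3^((n-2)/3) if n ≡ 2 (mod 3). -/
/-!
Let `maxPartProd n` be the claimed maximum (with value `1` at `n = 1`). For `n ≥ 2` it satisfies
`maxPartProd (n + 3) = 3 * maxPartProd n`, which reduces both `n ≤ maxPartProd n` and the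
supermultiplicativity `maxPartProd a * maxPartProd b ≤ maxPartProd (a + b)` to finitely many
cases with arguments below `5`. Induction along a list then bounds its product by `maxPartProd`
of its sum, and the bound is attained by a list of `3`s ending with a `2`, `3` or `4`.
-/

def maxPartProd (n : ℕ) : ℕ :=
  if n % 3 = 0 then 3 ^ (n / 3)
  else if n = 1 then 1
  else if n % 3 = 1 then 4 * 3 ^ ((n - 4) / 3)
  else 2 * 3 ^ ((n - 2) / 3)

theorem maxPartProd_add_three {n : ℕ} (hn : 2 ≤ n) :
    maxPartProd (n + 3) = 3 * maxPartProd n := by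
  unfold maxPartProd
  rw [show (n + 3) % 3 = n % 3 by omega, if_neg (by omega : n + 3 ≠ 1), if_neg (by omega : n ≠ 1)]
  split_ifs
  · rw [show (n + 3) / 3 = n / 3 + 1 by omega, pow_succ, mul_comm]
  · rw [show (n + 3 - 4) / 3 = (n - 4) / 3 + 1 by omega, pow_succ]; ring
  · rw [show (n + 3 - 2) / 3 = (n - 2) / 3 + 1 by omega, pow_succ]; ring

theorem maxPartProd_mul_le (a b : ℕ) : maxPartProd a * maxPartProd b ≤ maxPartProd (a + b) := by
  by_cases ha : 5 ≤ a
  · obtain ⟨c, rfl⟩ : ∃ c, a = c + 3 := ⟨a - 3, by omega⟩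
    rw [maxPartProd_add_three (by omega), show c + 3 + b = c + b + 3 by ring,
      maxPartProd_add_three (by omega), mul_assoc]
    exact Nat.mul_le_mul_left 3 (maxPartProd_mul_le c b)
  by_cases hb : 5 ≤ b
  · obtain ⟨c, rfl⟩ : ∃ c, b = c + 3 := ⟨b - 3, by omega⟩
    rw [maxPartProd_add_three (by omega), ← add_assoc,
      maxPartProd_add_three (by omega), mul_left_comm]
    exact Nat.mul_le_mul_left 3 (maxPartProd_mul_le a c)
  have base : ∀ a < 5, ∀ b < 5, maxPartProd a * maxPartProd b ≤ maxPartProd (a + b) := by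
    decide
  exact base a (by omega) b (by omega)
termination_by a + b

theorem le_maxPartProd (n : ℕ) : n ≤ maxPartProd n := by
  by_cases hn : 5 ≤ n
  · obtain ⟨c, rfl⟩ : ∃ c, n = c + 3 := ⟨n - 3, by omega⟩
    rw [maxPartProd_add_three (by omega)]
    have := le_maxPartProd c
    omega
  have base : ∀ n < 5, n ≤ maxPartProd n := by decide
  exact base n (by omega)

theorem List.prod_le_maxPartProd_sum (l : List ℕ) : l.prod ≤ maxPartProd l.sum := by
  induction l with
  | nil => decide
  | cons a l ih =>
    rw [List.prod_cons, List.sum_cons]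
    exact (Nat.mul_le_mul (le_maxPartProd a) ih).trans (maxPartProd_mul_le a l.sum)

theorem exists_prod_eq_maxPartProd {n : ℕ} (hn : 2 ≤ n) :
    ∃ l : List ℕ, (∀ x ∈ l, 1 ≤ x) ∧ l.sum = n ∧ l.prod = maxPartProd n := by
  by_cases h : 5 ≤ n
  · obtain ⟨c, rfl⟩ : ∃ c, n = c + 3 := ⟨n - 3, by omega⟩
    obtain ⟨l, hpos, hsum, hprod⟩ := exists_prod_eq_maxPartProd (n := c) (by omega)
    refine ⟨3 :: l, ?_, by simp [hsum, add_comm], ?_⟩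
    · simpa using hpos
    · rw [List.prod_cons, hprod, maxPartProd_add_three (by omega)]
  · refine ⟨[n], by simp; omega, by simp, ?_⟩
    have base : ∀ n < 5, 2 ≤ n → n = maxPartProd n := by decide
    simpa using base n (by omega) hn

theorem isGreatest_maxPartProd {n : ℕ} (hn : 2 ≤ n) :
    IsGreatest {P : ℕ | ∃ l : List ℕ, l.length ≤ n ∧ (∀ x ∈ l, 1 ≤ x) ∧ l.sum = n ∧ P = l.prod}
      (maxPartProd n) := by
  refine ⟨?_, ?_⟩
  · obtain ⟨l, hpos, hsum, hprod⟩ := exists_prod_eq_maxPartProd hn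
    exact ⟨l, hsum ▸ l.length_le_sum_of_one_le hpos, hpos, hsum, hprod.symm⟩
  · rintro P ⟨l, -, -, rfl, rfl⟩
    exact l.prod_le_maxPartProd_sum

/-- For `n ≥ 2`, the maximum of products of parts of partitions of `n`
into at most `n` positive parts. -/
theorem max_product_of_partition (n : ℕ) (hn : 2 ≤ n) :
    (n % 3 = 0 → IsGreatest
      {P : ℕ | ∃ l : List ℕ, l.length ≤ n ∧ (∀ x ∈ l, 1 ≤ x) ∧ l.sum = n ∧ P = l.prod}
      (3 ^ (n / 3))) ∧
    (n % 3 = 1 → IsGreatest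
      {P : ℕ | ∃ l : List ℕ, l.length ≤ n ∧ (∀ x ∈ l, 1 ≤ x) ∧ l.sum = n ∧ P = l.prod}
      (4 * 3 ^ ((n - 4) / 3))) ∧
    (n % 3 = 2 → IsGreatest
      {P : ℕ | ∃ l : List ℕ, l.length ≤ n ∧ (∀ x ∈ l, 1 ≤ x) ∧ l.sum = n ∧ P = l.prod}
      (2 * 3 ^ ((n - 2) / 3))) := by
  have h := isGreatest_maxPartProd hn
  have hn1 : n ≠ 1 := by omega
  refine ⟨fun h0 => ?_, fun h1 => ?_, fun h2 => ?_⟩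
  · simpa [maxPartProd, h0] using h
  · simpa [maxPartProd, h1, hn1] using h
  · simpa [maxPartProd, h2, hn1] using h
end

section
/- For any integer n ≥ 8 with n ≡ 2 (mod 3), the second largest value of the product m₁⋯m_k over all partitions m₁+⋯+m_k = n into positive integer parts equals 16·3^((n-8)/3). -/
/-!
Let `maxProd n` be the largest product of a partition of `n` (threes, with the remainder
absorbed by a single two or four). Every partition product is either `maxProd n` or at most
`8/9` of it: a part `1` contributes nothing while `9 · maxProd (n - 1) ≤ 8 · maxProd n`, a part
`a ≥ 5` can be split as `2 + (a - 2)` with a gain of at least `9/8`, and a partition into twos,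
threes and fours with at least three twos (counting a four as two twos) improves by `9/8` on
trading three twos for two threes. For `n = 3m + 8` the maximum is `18 · 3^m`, so every smaller
product is at most `16 · 3^m`, which `4 + 4 + 3 + ⋯ + 3` attains.
-/

def maxProd : ℕ → ℕ
  | 0 => 1
  | 1 => 1
  | 2 => 2
  | 3 => 3
  | 4 => 4
  | k + 5 => 3 * maxProd (k + 2)

theorem maxProd_add_three : ∀ {k : ℕ}, k ≠ 1 → maxProd (k + 3) = 3 * maxProd k
  | 0, _ => rfl
  | _ + 2, _ => rfl

theorem maxProd_le_maxProd_succ : ∀ k, maxProd k ≤ maxProd (k + 1)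
  | 0 | 1 | 2 | 3 | 4 => by decide
  | k + 5 => Nat.mul_le_mul_left 3 (maxProd_le_maxProd_succ (k + 2))

theorem two_mul_maxProd_le : ∀ k, 2 * maxProd k ≤ maxProd (k + 2)
  | 0 | 1 | 2 | 3 | 4 => by decide
  | k + 5 => by
    show 2 * (3 * maxProd (k + 2)) ≤ 3 * maxProd (k + 4)
    have : 2 * maxProd (k + 2) ≤ maxProd (k + 4) := two_mul_maxProd_le (k + 2)
    omega

theorem nine_mul_maxProd_le_eight_mul_maxProd_succ : ∀ {k}, k ≠ 0 →
    9 * maxProd k ≤ 8 * maxProd (k + 1)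
  | 1, _ | 2, _ | 3, _ | 4, _ => by decide
  | k + 5, _ => by
    show 9 * (3 * maxProd (k + 2)) ≤ 8 * (3 * maxProd (k + 3))
    have : 9 * maxProd (k + 2) ≤ 8 * maxProd (k + 3) :=
      nine_mul_maxProd_le_eight_mul_maxProd_succ (by omega)
    omega

theorem mul_maxProd_le : ∀ a k, a * maxProd k ≤ maxProd (a + k)
  | 0, _ => by simp
  | 1, k => by simpa [add_comm] using maxProd_le_maxProd_succ k
  | 2, k => by simpa [add_comm] using two_mul_maxProd_le k
  | 3, k => by
    rcases eq_or_ne k 1 with rfl | hk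
    · decide
    · rw [add_comm, maxProd_add_three hk]
  | 4, k => by
    have : 2 * maxProd k ≤ maxProd (k + 2) := two_mul_maxProd_le k
    have : 2 * maxProd (k + 2) ≤ maxProd (k + 4) := two_mul_maxProd_le (k + 2)
    rw [add_comm]
    omega
  | a + 5, k => by
    have ih := mul_maxProd_le (a + 2) k
    calc (a + 5) * maxProd k ≤ 3 * ((a + 2) * maxProd k) := by nlinarith
      _ ≤ 3 * maxProd (a + 2 + k) := Nat.mul_le_mul_left 3 ih
      _ = maxProd (a + 5 + k) := by
        rw [← maxProd_add_three (by omega)]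
        ring_nf

theorem prod_le_maxProd (l : List ℕ) : l.prod ≤ maxProd l.sum := by
  induction l with
  | nil => exact le_rfl
  | cons a l ih =>
    rw [List.prod_cons, List.sum_cons]
    exact (Nat.mul_le_mul_left a ih).trans (mul_maxProd_le a l.sum)

theorem maxProd_two_mul_add_three_mul {t : ℕ} (ht : t ≤ 2) (s : ℕ) :
    maxProd (2 * t + 3 * s) = 2 ^ t * 3 ^ s := by
  induction s with
  | zero => interval_cases t <;> rfl
  | succ s ih =>
    rw [show 2 * t + 3 * (s + 1) = 2 * t + 3 * s + 3 by ring, maxProd_add_three (by omega), ih,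
      pow_succ]
    ring

theorem two_pow_mul_three_pow_le_maxProd (t s : ℕ) :
    2 ^ t * 3 ^ s ≤ maxProd (2 * t + 3 * s) := by
  have h := prod_le_maxProd (List.replicate t 2 ++ List.replicate s 3)
  rwa [List.prod_append, List.sum_append, List.prod_replicate, List.prod_replicate,
    List.sum_replicate, List.sum_replicate, smul_eq_mul, smul_eq_mul, mul_comm t,
    mul_comm s] at h

theorem two_pow_mul_three_pow_eq_maxProd_or (t s : ℕ) :
    2 ^ t * 3 ^ s = maxProd (2 * t + 3 * s) ∨
      9 * (2 ^ t * 3 ^ s) ≤ 8 * maxProd (2 * t + 3 * s) := by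
  rcases le_or_gt t 2 with ht | ht
  · exact Or.inl (maxProd_two_mul_add_three_mul ht s).symm
  · obtain ⟨u, rfl⟩ : ∃ u, t = u + 3 := ⟨t - 3, by omega⟩
    right
    calc 9 * (2 ^ (u + 3) * 3 ^ s) = 8 * (2 ^ u * 3 ^ (s + 2)) := by ring
      _ ≤ 8 * maxProd (2 * u + 3 * (s + 2)) :=
        Nat.mul_le_mul_left 8 (two_pow_mul_three_pow_le_maxProd u (s + 2))
      _ = 8 * maxProd (2 * (u + 3) + 3 * s) := by ring_nf

theorem exists_sum_eq_prod_eq_two_pow_mul_three_pow :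
    ∀ {l : List ℕ}, (∀ x ∈ l, x = 2 ∨ x = 3 ∨ x = 4) →
      ∃ t s, l.sum = 2 * t + 3 * s ∧ l.prod = 2 ^ t * 3 ^ s
  | [], _ => ⟨0, 0, rfl, rfl⟩
  | a :: l, h => by
    obtain ⟨t, s, hsum, hprod⟩ :=
      exists_sum_eq_prod_eq_two_pow_mul_three_pow (fun x hx => h x (List.mem_cons_of_mem a hx))
    simp only [List.sum_cons, List.prod_cons, hsum, hprod]
    rcases h a List.mem_cons_self with rfl | rfl | rfl
    · exact ⟨t + 1, s, by ring, by ring⟩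
    · exact ⟨t, s + 1, by ring, by ring⟩
    · exact ⟨t + 2, s, by ring, by ring⟩

theorem prod_eq_maxProd_or_of_one_mem {l : List ℕ} (h : 1 ∈ l) :
    l.prod = maxProd l.sum ∨ 9 * l.prod ≤ 8 * maxProd l.sum := by
  have hperm := List.perm_cons_erase h
  have hle := prod_le_maxProd (l.erase 1)
  rw [hperm.sum_eq, hperm.prod_eq, List.sum_cons, List.prod_cons, one_mul, add_comm]
  rcases Nat.eq_zero_or_pos (l.erase 1).sum with h0 | hpos
  · simp only [h0, zero_add, maxProd] at hle ⊢
    omega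
  · exact Or.inr ((Nat.mul_le_mul_left 9 hle).trans
      (nine_mul_maxProd_le_eight_mul_maxProd_succ hpos.ne'))

theorem nine_mul_prod_le_of_mem_of_five_le {l : List ℕ} {a : ℕ} (ha : a ∈ l) (h5 : 5 ≤ a) :
    9 * l.prod ≤ 8 * maxProd l.sum := by
  have hperm := List.perm_cons_erase ha
  rw [hperm.sum_eq, hperm.prod_eq, List.sum_cons, List.prod_cons]
  set r := l.erase a
  have hsplit := prod_le_maxProd (2 :: (a - 2) :: r)
  simp only [List.prod_cons, List.sum_cons] at hsplit
  rw [show 2 + (a - 2 + r.sum) = a + r.sum by omega] at hsplit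
  have h98 : 9 * a ≤ 8 * (2 * (a - 2)) := by omega
  calc 9 * (a * r.prod) = 9 * a * r.prod := by ring
    _ ≤ 8 * (2 * (a - 2)) * r.prod := Nat.mul_le_mul_right _ h98
    _ = 8 * (2 * ((a - 2) * r.prod)) := by ring
    _ ≤ 8 * maxProd (a + r.sum) := Nat.mul_le_mul_left 8 hsplit

theorem prod_eq_maxProd_or_nine_mul_prod_le (l : List ℕ) :
    l.prod = maxProd l.sum ∨ 9 * l.prod ≤ 8 * maxProd l.sum := by
  by_cases h0 : 0 ∈ l
  · simp [List.prod_eq_zero h0]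
  by_cases h1 : 1 ∈ l
  · exact prod_eq_maxProd_or_of_one_mem h1
  by_cases h5 : ∃ a ∈ l, 5 ≤ a
  · obtain ⟨a, ha, h5⟩ := h5
    exact Or.inr (nine_mul_prod_le_of_mem_of_five_le ha h5)
  push Not at h5
  obtain ⟨t, s, hsum, hprod⟩ := exists_sum_eq_prod_eq_two_pow_mul_three_pow (l := l) fun x hx => by
    have := h5 x hx
    have := ne_of_mem_of_not_mem hx h0
    have := ne_of_mem_of_not_mem hx h1
    omega
  rw [hsum, hprod]
  exact two_pow_mul_three_pow_eq_maxProd_or t s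

/-- For `n ≥ 8` with `n ≡ 2 (mod 3)`, the second largest product of parts over
partitions of `n` into positive parts equals `16·3^((n-8)/3)`; i.e. it is the
greatest product strictly smaller than the maximal product `2·3^((n-2)/3)`. -/
theorem second_largest_product (n : ℕ) (hn : 8 ≤ n) (h3 : n % 3 = 2) :
    IsGreatest
      {P : ℕ | ∃ l : List ℕ, (∀ x ∈ l, 1 ≤ x) ∧ l.sum = n ∧ P = l.prod ∧
        P < 2 * 3 ^ ((n - 2) / 3)}
      (16 * 3 ^ ((n - 8) / 3)) := by
  obtain ⟨m, rfl⟩ : ∃ m, n = 2 * 4 + 3 * m := ⟨(n - 8) / 3, by omega⟩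
  rw [show (2 * 4 + 3 * m - 8) / 3 = m by omega, show (2 * 4 + 3 * m - 2) / 3 = m + 2 by omega]
  have hmax : maxProd (2 * 4 + 3 * m) = 18 * 3 ^ m := by
    rw [show 2 * 4 + 3 * m = 2 * 1 + 3 * (m + 2) by ring, maxProd_two_mul_add_three_mul (by norm_num)]
    ring
  have hpos : 0 < 3 ^ m := by positivity
  constructor
  · refine ⟨List.replicate 4 2 ++ List.replicate m 3, ?_, ?_, ?_, ?_⟩
    · simp +contextual [List.mem_replicate]
    · simp [List.sum_replicate]
      ring
    · simp [List.prod_replicate]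
      ring
    · rw [pow_add]
      omega
  · rintro _ ⟨l, -, hsum, rfl, hlt⟩
    rw [pow_add] at hlt
    rcases prod_eq_maxProd_or_nine_mul_prod_le l with heq | hle
    · rw [heq, hsum, hmax] at hlt
      omega
    · rw [hsum, hmax] at hle
      omega
end

section
/- In the maximal-product partition of n ≥ 2 into positive parts, every part lies in {2,3,4}: more precisely, any partition achieving the maximal product of parts contains no part equal to 1 and no part greater than 4. -/
/-!
If a part equal to `1` sits next to another part `y`, merging them into `y + 1` raises the
product; a part `x ≥ 5` can be split into `2` and `x - 2` with `2 (x - 2) > x`. Either move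
keeps the sum, so neither can occur in a partition of maximal product.
-/

open Multiset

theorem Multiset.prod_add_lt_prod_add {R : Type*} [CommSemiring R] [PartialOrder R]
    [IsStrictOrderedRing R] {s s' t : Multiset R} (ht : ∀ a ∈ t, 0 < a)
    (h : s.prod < s'.prod) : (s + t).prod < (s' + t).prod := by
  rw [prod_add, prod_add]
  exact mul_lt_mul_of_pos_right h (prod_pos ht)

def IsMaxProductPartition (n : ℕ) (m : Multiset ℕ) : Prop :=
  (∀ x ∈ m, 1 ≤ x) ∧ m.sum = n ∧
    ∀ m' : Multiset ℕ, (∀ x ∈ m', 1 ≤ x) → m'.sum = n → m'.prod ≤ m.prod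

namespace IsMaxProductPartition

variable {n : ℕ}

theorem prod_le_of_sum_eq {s t : Multiset ℕ} (h : IsMaxProductPartition n (s + t)) {s' : Multiset ℕ}
    (hs' : ∀ x ∈ s', 1 ≤ x) (hsum : s'.sum = s.sum) : s'.prod ≤ s.prod := by
  obtain ⟨hpos, hmsum, hmax⟩ := h
  have ht : ∀ x ∈ t, 0 < x := fun x hx => hpos x (mem_add.2 (Or.inr hx))
  by_contra! hlt
  refine (hmax (s' + t) ?_ ?_).not_gt (prod_add_lt_prod_add ht hlt)
  · intro x hx
    rcases mem_add.1 hx with hx | hx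
    exacts [hs' x hx, ht x hx]
  · rw [sum_add, hsum, ← sum_add, hmsum]

theorem two_le_of_mem {m : Multiset ℕ} (h : IsMaxProductPartition n m) (hn : 2 ≤ n)
    {x : ℕ} (hx : x ∈ m) : 2 ≤ x := by
  obtain ⟨t, rfl⟩ := exists_cons_of_mem hx
  have hx1 : 1 ≤ x := h.1 x hx
  by_contra! hlt
  obtain rfl : x = 1 := by omega
  obtain ⟨y, hy⟩ : ∃ y, y ∈ t := by
    refine exists_mem_of_ne_zero fun ht => ?_
    have := h.2.1
    simp only [ht, sum_cons, sum_zero] at this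
    omega
  obtain ⟨u, rfl⟩ := exists_cons_of_mem hy
  rw [show 1 ::ₘ y ::ₘ u = {1, y} + u by simp] at h
  have hmerge := h.prod_le_of_sum_eq (s' := {y + 1}) (by simp) (by simp [add_comm])
  simp at hmerge

theorem le_four_of_mem {m : Multiset ℕ} (h : IsMaxProductPartition n m) {x : ℕ}
    (hx : x ∈ m) : x ≤ 4 := by
  obtain ⟨t, rfl⟩ := exists_cons_of_mem hx
  rw [← singleton_add] at h
  by_contra! hlt
  have hsplit := h.prod_le_of_sum_eq (s' := {2, x - 2})
    (by simp only [insert_eq_cons, mem_cons, mem_singleton]; omega)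
    (by simp only [insert_eq_cons, sum_cons, sum_singleton]; omega)
  simp only [insert_eq_cons, prod_cons, prod_singleton] at hsplit
  omega

end IsMaxProductPartition

/-- Any partition of `n ≥ 2` into positive parts achieving the maximal product
of parts has all parts in `{2,3,4}`: no part equal to `1` and no part `> 4`. -/
theorem maximal_product_parts_in_two_three_four (n : ℕ) (hn : 2 ≤ n)
    (m : Multiset ℕ) (hpos : ∀ x ∈ m, 1 ≤ x) (hsum : m.sum = n)
    (hmax : ∀ m' : Multiset ℕ, (∀ x ∈ m', 1 ≤ x) → m'.sum = n → m'.prod ≤ m.prod) :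
    ∀ x ∈ m, 2 ≤ x ∧ x ≤ 4 := by
  have h : IsMaxProductPartition n m := ⟨hpos, hsum, hmax⟩
  exact fun x hx => ⟨h.two_le_of_mem hn hx, h.le_four_of_mem hx⟩
end

section
/- For d ≥ 1, the coefficients p_d(n) defined by the infinite product generating function ∏_{n≥1} (1-q^n)^{-n^{d-1}} satisfy p_d(n) = Σ_{k≤n} (1/k!) Σ_{m₁,…,m_k ≥ 1, m₁+⋯+m_k = n} σ_d(m₁)⋯σ_d(m_k)/(m₁⋯m_k), where σ_d(m) = Σ_{t|m} t^d. -/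
open PowerSeries Finset

/-- `p : ℕ → ℚ` is the coefficient sequence of `∏_{n≥1} (1-q^n)^{-n^(d-1)}`:
for every `N`, multiplying the series `∑ p(n) qⁿ` by the partial product
`∏_{n=1}^{N} (1-qⁿ)^(n^(d-1))` gives a series agreeing with `1` up to order `N`. -/
def IsPdSeries (d : ℕ) (p : ℕ → ℚ) : Prop :=
  ∀ N k : ℕ, k ≤ N →
    (PowerSeries.coeff k) ((PowerSeries.mk p) *
      ∏ n ∈ Finset.Icc 1 N, (1 - (PowerSeries.X : PowerSeries ℚ) ^ n) ^ (n ^ (d - 1))) =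
    if k = 0 then 1 else 0

/-!
Let `L = ∑_{m ≥ 1} σ_d(m)/m · qᵐ`; the right-hand side is the `n`-th coefficient of
`exp L = ∑_k Lᵏ/k!`. Work with the Euler derivation `θ = q d/dq`, for which
`θ L = ∑ σ_d(m) qᵐ` and `θ (exp L) = exp L · θ L`. Since
`θ (1 - qⁿ) = -(1 - qⁿ) · n ∑_{j≥1} q^{nj}`, the partial product
`F_N = ∏_{n ≤ N} (1 - qⁿ)^{n^{d-1}}` satisfies `θ F_N = -F_N · T_N` with
`T_N = ∑_{n ≤ N} n^d ∑_{j≥1} q^{nj}`, whose `m`-th coefficient is `σ_d(m)` for `m ≤ N`.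
Hence `θ (exp L · F_N) ≡ 0 mod q^{N+1}`, so `exp L · F_N ≡ 1 mod q^{N+1}`; as `F_N` is a
unit, `p` agrees with the coefficients of `exp L` up to order `N`.
-/

open ArithmeticFunction
open scoped ArithmeticFunction.sigma

namespace Derivation

variable {R A : Type*} [CommSemiring R] [CommSemiring A] [Algebra R A] (D : Derivation R A A)

theorem map_pow_of_eq_mul {u g : A} (h : D u = u * g) (e : ℕ) :
    D (u ^ e) = u ^ e * (e • g) := by
  induction e with
  | zero => simp
  | succ e ih =>
    rw [pow_succ, leibniz, ih, h, smul_eq_mul, smul_eq_mul, succ_nsmul]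
    ring

theorem map_prod_of_eq_mul {ι : Type*} {s : Finset ι} {u g : ι → A}
    (h : ∀ i ∈ s, D (u i) = u i * g i) :
    D (∏ i ∈ s, u i) = (∏ i ∈ s, u i) * ∑ i ∈ s, g i := by
  classical
  induction s using Finset.induction_on with
  | empty => simp
  | insert a s ha ih =>
    rw [prod_insert ha, sum_insert ha, leibniz, ih fun i hi => h i (mem_insert_of_mem hi),
      h a (mem_insert_self a s), smul_eq_mul, smul_eq_mul]
    ring

end Derivation

namespace PowerSeries

section CommSemiring

variable {R : Type*} [CommSemiring R]

variable (R) in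
noncomputable def eulerOperator : Derivation R R⟦X⟧ R⟦X⟧ := (X : R⟦X⟧) • derivative R

theorem eulerOperator_apply (f : R⟦X⟧) : eulerOperator R f = X * d⁄dX R f := rfl

theorem coeff_eulerOperator (f : R⟦X⟧) (n : ℕ) :
    coeff n (eulerOperator R f) = n * coeff n f := by
  rw [eulerOperator_apply]
  cases n with
  | zero => simp
  | succ n => rw [coeff_succ_X_mul, coeff_derivative, mul_comm, Nat.cast_succ]

theorem eulerOperator_X_pow (n : ℕ) : eulerOperator R (X ^ n) = (n : R) • X ^ n := by
  ext m
  rw [coeff_eulerOperator, coeff_smul, coeff_X_pow]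
  split_ifs with h <;> simp [h]

theorem coeff_pow_eq_sum_antidiagonalTuple (φ : R⟦X⟧) (k n : ℕ) :
    coeff n (φ ^ k) = ∑ m ∈ Nat.antidiagonalTuple k n, ∏ i, coeff (m i) φ := by
  have h := coeff_prod (fun _ : Fin k => φ) n univ
  rw [prod_const, card_univ, Fintype.card_fin] at h
  rw [h, finsuppAntidiag, sum_map, ← piAntidiag_univ_fin_eq_antidiagonalTuple]
  exact sum_attach (piAntidiag univ n) (fun m : Fin k → ℕ => ∏ i, coeff (m i) φ)

theorem coeff_pow_eq_sum_antidiagonalTuple_of_constantCoeff_eq_zero {φ : R⟦X⟧}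
    (hφ : constantCoeff φ = 0) (k n : ℕ) :
    coeff n (φ ^ k) =
      ∑ m ∈ (Nat.antidiagonalTuple k n).filter (fun m => ∀ i, 1 ≤ m i),
        ∏ i, coeff (m i) φ := by
  rw [coeff_pow_eq_sum_antidiagonalTuple, sum_filter_of_ne]
  intro m _ hm i
  by_contra hi
  exact hm (prod_eq_zero (mem_univ i) (by simp [Nat.lt_one_iff.mp (not_le.mp hi), hφ]))

variable (R) in
def multiplesSeries (n : ℕ) : R⟦X⟧ := mk fun m => if n ∣ m ∧ m ≠ 0 then 1 else 0

end CommSemiring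

theorem X_pow_succ_dvd_sub_C_of_dvd_eulerOperator {K : Type*} [Field K] [CharZero K]
    {f : K⟦X⟧} {N : ℕ} (h : X ^ (N + 1) ∣ eulerOperator K f) :
    X ^ (N + 1) ∣ f - C (constantCoeff f) := by
  rw [X_pow_dvd_iff] at h ⊢
  intro m hm
  rcases Nat.eq_zero_or_pos m with rfl | hm0
  · simp
  · have := h m hm
    rw [coeff_eulerOperator, mul_eq_zero] at this
    simpa [coeff_C, hm0.ne'] using this.resolve_left (by exact_mod_cast hm0.ne')

theorem coeff_eq_of_X_pow_succ_dvd_sub_mul {R : Type*} [CommRing R] {A B u : R⟦X⟧}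
    (hu : IsUnit u) {N : ℕ} (h : X ^ (N + 1) ∣ (A - B) * u) : coeff N A = coeff N B := by
  rw [hu.dvd_mul_right, X_pow_dvd_iff] at h
  exact sub_eq_zero.mp (by simpa using h N N.lt_succ_self)

section ExpSubst

variable {A : Type*} [CommRing A] [Algebra ℚ A] {φ : A⟦X⟧}

theorem constantCoeff_exp_subst (hφ : constantCoeff φ = 0) :
    constantCoeff ((exp A).subst φ) = 1 := by
  rw [← coeff_zero_eq_constantCoeff_apply, coeff_subst' (HasSubst.of_constantCoeff_zero' hφ),
    finsum_eq_single _ 0]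
  · simp
  · intro k hk
    simp [coeff_zero_eq_constantCoeff, hφ, hk]

theorem coeff_exp_subst (hφ : constantCoeff φ = 0) {n : ℕ} (hn : n ≠ 0) :
    coeff n ((exp A).subst φ) =
      ∑ k ∈ Icc 1 n, algebraMap ℚ A (1 / k.factorial) * coeff n (φ ^ k) := by
  rw [coeff_subst' (HasSubst.of_constantCoeff_zero' hφ),
    finsum_eq_sum_of_support_subset _ (s := Icc 1 n)]
  · simp only [coeff_exp, smul_eq_mul]
  · intro k hk
    rw [Function.mem_support] at hk
    rw [coe_Icc, Set.mem_Icc, Nat.one_le_iff_ne_zero]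
    constructor
    · rintro rfl
      simp [coeff_one, hn] at hk
    · by_contra hlt
      have hXk : X ^ k ∣ φ ^ k := pow_dvd_pow_of_dvd (X_dvd_iff.mpr hφ) k
      exact hk (by rw [X_pow_dvd_iff.mp hXk n (by omega), smul_zero])

theorem eulerOperator_exp_subst (hφ : constantCoeff φ = 0) :
    eulerOperator A ((exp A).subst φ) = (exp A).subst φ * eulerOperator A φ := by
  rw [eulerOperator_apply, eulerOperator_apply,
    derivative_subst (HasSubst.of_constantCoeff_zero' hφ), derivative_exp]
  ring

end ExpSubst

section CommRing

variable {R : Type*} [CommRing R] {n : ℕ}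

theorem one_sub_X_pow_mul_multiplesSeries (hn : n ≠ 0) :
    (1 - X ^ n) * multiplesSeries R n = X ^ n := by
  ext m
  rw [sub_mul, one_mul, map_sub, coeff_X_pow_mul', coeff_X_pow]
  simp only [multiplesSeries, coeff_mk]
  by_cases hnm : n ≤ m
  · obtain ⟨j, rfl⟩ := Nat.exists_eq_add_of_le hnm
    rcases eq_or_ne j 0 with rfl | hj
    · simp [hn]
    · simp [Nat.dvd_add_self_left, hn, hj]
  · have : ¬ (n ∣ m ∧ m ≠ 0) := fun h => hnm (Nat.le_of_dvd (Nat.pos_of_ne_zero h.2) h.1)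
    simp [hnm, this, show m ≠ n by omega]

theorem eulerOperator_one_sub_X_pow (hn : n ≠ 0) :
    eulerOperator R (1 - X ^ n) = (1 - X ^ n) * (-(n : R) • multiplesSeries R n) := by
  rw [map_sub, Derivation.map_one_eq_zero, eulerOperator_X_pow, mul_smul_comm,
    one_sub_X_pow_mul_multiplesSeries hn, zero_sub, neg_smul]

end CommRing

end PowerSeries

namespace PdSeries

noncomputable def sigmaLogSeries (d : ℕ) : ℚ⟦X⟧ :=
  PowerSeries.mk fun m => (σ d m : ℚ) / m

noncomputable def sigmaExpSeries (d : ℕ) : ℚ⟦X⟧ := (exp ℚ).subst (sigmaLogSeries d)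

noncomputable def partialProd (d N : ℕ) : ℚ⟦X⟧ :=
  ∏ n ∈ Icc 1 N, (1 - X ^ n) ^ (n ^ (d - 1))

noncomputable def truncSigmaSeries (d N : ℕ) : ℚ⟦X⟧ :=
  ∑ n ∈ Icc 1 N, ((n : ℚ) ^ d) • multiplesSeries ℚ n

theorem constantCoeff_sigmaLogSeries (d : ℕ) : constantCoeff (sigmaLogSeries d) = 0 := by
  simp [sigmaLogSeries, ← coeff_zero_eq_constantCoeff_apply]

theorem coeff_eulerOperator_sigmaLogSeries (d m : ℕ) :
    coeff m (eulerOperator ℚ (sigmaLogSeries d)) = σ d m := by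
  rw [coeff_eulerOperator, sigmaLogSeries, coeff_mk]
  rcases eq_or_ne m 0 with rfl | hm
  · simp
  · exact mul_div_cancel₀ _ (Nat.cast_ne_zero.mpr hm)

theorem constantCoeff_sigmaExpSeries (d : ℕ) : constantCoeff (sigmaExpSeries d) = 1 :=
  constantCoeff_exp_subst (constantCoeff_sigmaLogSeries d)

theorem eulerOperator_sigmaExpSeries (d : ℕ) :
    eulerOperator ℚ (sigmaExpSeries d) =
      sigmaExpSeries d * eulerOperator ℚ (sigmaLogSeries d) :=
  eulerOperator_exp_subst (constantCoeff_sigmaLogSeries d)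

theorem coeff_sigmaExpSeries (d : ℕ) {n : ℕ} (hn : n ≠ 0) :
    coeff n (sigmaExpSeries d) = ∑ k ∈ Icc 1 n, (1 / (k.factorial : ℚ)) *
      ∑ m ∈ (Nat.antidiagonalTuple k n).filter (fun m => ∀ i, 1 ≤ m i),
        (∏ i, ((∑ t ∈ (m i).divisors, t ^ d : ℕ) : ℚ)) / (∏ i, (m i : ℚ)) := by
  rw [sigmaExpSeries, coeff_exp_subst (constantCoeff_sigmaLogSeries d) hn]
  refine sum_congr rfl fun k _ => ?_
  rw [coeff_pow_eq_sum_antidiagonalTuple_of_constantCoeff_eq_zero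
    (constantCoeff_sigmaLogSeries d)]
  simp only [Algebra.algebraMap_self, RingHom.id_apply, sigmaLogSeries, coeff_mk, sigma_apply,
    prod_div_distrib]

theorem constantCoeff_partialProd (d N : ℕ) : constantCoeff (partialProd d N) = 1 := by
  refine (map_prod _ _ _).trans (prod_eq_one fun n hn => ?_)
  simp [show n ≠ 0 by simp at hn; omega]

theorem eulerOperator_partialProd {d : ℕ} (hd : 1 ≤ d) (N : ℕ) :
    eulerOperator ℚ (partialProd d N) = partialProd d N * -truncSigmaSeries d N := by
  rw [partialProd, Derivation.map_prod_of_eq_mul _ fun n hn => Derivation.map_pow_of_eq_mul _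
    (eulerOperator_one_sub_X_pow (by simp at hn; omega)) _, truncSigmaSeries, ← sum_neg_distrib]
  refine congrArg _ (sum_congr rfl fun n _ => ?_)
  rw [neg_smul, smul_neg, ← smul_assoc, nsmul_eq_mul, Nat.cast_pow, ← pow_succ,
    Nat.sub_add_cancel hd]

theorem coeff_truncSigmaSeries {d N m : ℕ} (hm : m ≤ N) :
    coeff m (truncSigmaSeries d N) = σ d m := by
  simp only [truncSigmaSeries, map_sum, coeff_smul, multiplesSeries, coeff_mk, smul_eq_mul,
    mul_ite, mul_one, mul_zero]
  rw [sum_ite, sum_const_zero, add_zero, sigma_apply, Nat.cast_sum]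
  refine sum_congr (ext fun t => ?_) fun t _ => by push_cast; rfl
  simp only [mem_filter, mem_Icc, Nat.mem_divisors]
  refine ⟨And.right, fun ⟨htm, hm0⟩ => ⟨⟨?_, ?_⟩, htm, hm0⟩⟩
  · exact Nat.pos_of_dvd_of_pos htm (Nat.pos_of_ne_zero hm0)
  · exact (Nat.le_of_dvd (Nat.pos_of_ne_zero hm0) htm).trans hm

theorem X_pow_succ_dvd_eulerOperator_sigmaLogSeries_sub (d N : ℕ) :
    X ^ (N + 1) ∣ eulerOperator ℚ (sigmaLogSeries d) - truncSigmaSeries d N := by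
  rw [X_pow_dvd_iff]
  intro m hm
  rw [map_sub, coeff_eulerOperator_sigmaLogSeries, coeff_truncSigmaSeries (by omega), sub_self]

theorem X_pow_succ_dvd_sigmaExpSeries_mul_partialProd_sub_one {d : ℕ} (hd : 1 ≤ d) (N : ℕ) :
    X ^ (N + 1) ∣ sigmaExpSeries d * partialProd d N - 1 := by
  have h : eulerOperator ℚ (sigmaExpSeries d * partialProd d N) =
      sigmaExpSeries d * partialProd d N *
        (eulerOperator ℚ (sigmaLogSeries d) - truncSigmaSeries d N) := by
    rw [Derivation.leibniz, smul_eq_mul, smul_eq_mul, eulerOperator_partialProd hd,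
      eulerOperator_sigmaExpSeries]
    ring
  have := X_pow_succ_dvd_sub_C_of_dvd_eulerOperator
    (h ▸ dvd_mul_of_dvd_right (X_pow_succ_dvd_eulerOperator_sigmaLogSeries_sub d N) _)
  rwa [map_mul, constantCoeff_sigmaExpSeries, constantCoeff_partialProd, mul_one, map_one] at this

theorem X_pow_succ_dvd_mk_mul_partialProd_sub_one {d : ℕ} {p : ℕ → ℚ} (hp : IsPdSeries d p)
    (N : ℕ) : X ^ (N + 1) ∣ PowerSeries.mk p * partialProd d N - 1 := by
  rw [X_pow_dvd_iff]
  intro k hk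
  rw [map_sub, coeff_one, partialProd, hp N k (by omega), sub_self]

end PdSeries

open PdSeries in
/-- The coefficients of `∏ (1-qⁿ)^(-n^(d-1))` are given by
`p_d(n) = ∑_{k ≤ n} (1/k!) ∑_{m₁+⋯+m_k=n, mᵢ≥1} σ_d(m₁)⋯σ_d(m_k)/(m₁⋯m_k)`. -/
theorem pd_eq_sigma_sum (d : ℕ) (hd : 1 ≤ d) (p : ℕ → ℚ) (hp : IsPdSeries d p)
    (n : ℕ) (hn : 1 ≤ n) :
    p n = ∑ k ∈ Finset.Icc 1 n, (1 / (Nat.factorial k : ℚ)) *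
      ∑ m ∈ (Finset.Nat.antidiagonalTuple k n).filter (fun m => ∀ i, 1 ≤ m i),
        (∏ i, ((∑ t ∈ (m i).divisors, t ^ d : ℕ) : ℚ)) / (∏ i, (m i : ℚ)) := by
  have hF : IsUnit (partialProd d n) :=
    isUnit_iff_constantCoeff.mpr (by simp [constantCoeff_partialProd])
  have h : X ^ (n + 1) ∣ (PowerSeries.mk p - sigmaExpSeries d) * partialProd d n := by
    simpa [sub_mul] using dvd_sub (X_pow_succ_dvd_mk_mul_partialProd_sub_one hp n)
      (X_pow_succ_dvd_sigmaExpSeries_mul_partialProd_sub_one hd n)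
  rw [← coeff_sigmaExpSeries d (by omega), ← coeff_eq_of_X_pow_succ_dvd_sub_mul hF h, coeff_mk]
end

section
/- For n ≥ 2 with n ≡ 0 (mod 3) and d ≥ 1, the coefficients p_d(n) satisfy 3^{(d-1)n/3}/(n/3)! < p_d(n) ≤ 3^{(d-1)n/3}·p(n), where p(n) = p_1(n) is the ordinary partition function. -/
open PowerSeries Finset

/-!
Inverting the Euler product factor by factor, `(1 - q^i)^{-a}` contributes `multichoose a m` to
the coefficient of `q^{im}`, so `p_d(n) = ∑_{λ ⊢ n} ∏_i multichoose(i^{d-1}, m_i(λ))`, where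
`m_i(λ)` is the multiplicity of the part `i`. Since `multichoose a m ≤ a^m`, the term of `λ` is
at most `(∏ λ)^{d-1}`, and a product of positive integers with sum `n` is at most `3^{n/3}`
because `k^3 ≤ 3^k`. For the lower bound keep only the partitions `1^n` and `3^{n/3}`: their
terms are `1` and `multichoose(3^{d-1}, n/3) ≥ 3^{(d-1)n/3} / (n/3)!`.
-/

open scoped PowerSeries.WithPiTopology

namespace PowerSeries

variable {R : Type*} [CommRing R]

theorem hasSum_expand_sub_C [TopologicalSpace R] (i : ℕ) (hi : i ≠ 0) (φ : R⟦X⟧) :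
    HasSum (fun j ↦ coeff (j + 1) φ • X ^ (i * (j + 1)))
      (expand i hi φ - C (constantCoeff φ)) := by
  rw [WithPiTopology.hasSum_iff_hasSum_coeff]
  intro m
  simp only [coeff_smul, coeff_X_pow, smul_eq_mul, mul_ite, mul_one, mul_zero, map_sub, coeff_C,
    coeff_expand]
  rcases Nat.eq_zero_or_pos m with rfl | hm
  · simp [hi]
  by_cases hdvd : i ∣ m
  · obtain ⟨q, rfl⟩ := hdvd
    obtain ⟨q, rfl⟩ := Nat.exists_eq_add_one_of_ne_zero (Nat.pos_of_mul_pos_left hm).ne'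
    simp only [dvd_mul_right, if_true, Nat.mul_div_cancel_left _ (Nat.pos_of_ne_zero hi),
      mul_ne_zero hi q.succ_ne_zero, if_false, sub_zero]
    convert hasSum_single q (fun j hj ↦ if_neg ?_) using 1
    · simp
    · rw [Nat.mul_right_inj hi]; omega
  · rw [if_neg hdvd, if_neg hm.ne', sub_zero]
    convert hasSum_zero with j
    exact if_neg fun h ↦ hdvd ⟨_, h⟩

theorem expand_eq_C_add_tsum [TopologicalSpace R] [T2Space R] (i : ℕ) (hi : i ≠ 0)
    (φ : R⟦X⟧) :
    expand i hi φ = C (constantCoeff φ) + ∑' j, coeff (j + 1) φ • X ^ (i * (j + 1)) := by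
  rw [(hasSum_expand_sub_C i hi φ).tsum_eq, add_sub_cancel]

theorem coeff_invOneSubPow_val (a m : ℕ) :
    coeff m (invOneSubPow R a).val = (a.multichoose m : R) := by
  rcases Nat.eq_zero_or_pos a with rfl | ha
  · rcases m with _ | m <;> simp [invOneSubPow_zero, coeff_one]
  · rw [invOneSubPow_val_eq_mk_sub_one_add_choose_of_pos _ _ ha, coeff_mk, Nat.multichoose_eq,
      Nat.choose_symm_add]
    congr 2
    omega

theorem expand_invOneSubPow_mul_one_sub_X_pow_pow (i : ℕ) (hi : i ≠ 0) (a : ℕ) :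
    expand i hi (invOneSubPow R a).val * (1 - X ^ i) ^ a = 1 := by
  have h : expand i hi ((1 - X : R⟦X⟧) ^ a) = (1 - X ^ i) ^ a := by simp
  rw [← h, ← invOneSubPow_inv_eq_one_sub_pow, ← map_mul, Units.inv_eq_val_inv, Units.mul_inv,
    map_one]

theorem coeff_eq_of_coeff_mul_eq_coeff_one {f P Q : R⟦X⟧} (hPQ : P * Q = 1) {N : ℕ}
    (h : ∀ k ≤ N, coeff k (f * P) = coeff k 1) {n : ℕ} (hn : n ≤ N) :
    coeff n f = coeff n Q := by
  have htrunc : trunc (N + 1) (f * P) = trunc (N + 1) 1 := by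
    ext k
    simp only [coeff_trunc]
    split_ifs with hk
    exacts [h k (by omega), rfl]
  have hn' : n < N + 1 := Nat.lt_succ_of_le hn
  calc coeff n f = coeff n (f * P * Q) := by rw [mul_assoc, hPQ, mul_one]
    _ = coeff n (1 * Q) := by
      rw [coeff_mul_eq_coeff_trunc_mul_trunc _ _ hn', htrunc,
        ← coeff_mul_eq_coeff_trunc_mul_trunc _ _ hn']
    _ = coeff n Q := by rw [one_mul]

end PowerSeries

namespace Nat

theorem multichoose_le_pow (a m : ℕ) : a.multichoose m ≤ a ^ m := by
  have h := ascFactorial_le_factorial_mul_pow a m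
  rw [ascFactorial_eq_factorial_mul_choose', ← multichoose_eq] at h
  exact Nat.le_of_mul_le_mul_left h (factorial_pos m)

theorem pow_le_factorial_mul_multichoose (a m : ℕ) : a ^ m ≤ m ! * a.multichoose m := by
  rw [multichoose_eq, ← ascFactorial_eq_factorial_mul_choose']
  exact pow_succ_le_ascFactorial a m

theorem pow_three_le_three_pow (k : ℕ) : k ^ 3 ≤ 3 ^ k := by
  induction k with
  | zero => norm_num
  | succ k ih =>
    rcases Nat.lt_or_ge k 3 with hk | hk
    · interval_cases k <;> norm_num
    · have hk2 : 3 * k ^ 2 ≤ k ^ 3 := by nlinarith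
      calc (k + 1) ^ 3 ≤ 3 * k ^ 3 := by nlinarith
        _ ≤ 3 ^ (k + 1) := by rw [_root_.pow_succ' 3 k]; exact Nat.mul_le_mul_left 3 ih

end Nat

theorem Multiset.prod_pow_three_le_three_pow_sum (s : Multiset ℕ) : s.prod ^ 3 ≤ 3 ^ s.sum := by
  induction s using Multiset.induction_on with
  | empty => simp
  | cons k s ih =>
    rw [prod_cons, sum_cons, mul_pow, pow_add]
    exact Nat.mul_le_mul (Nat.pow_three_le_three_pow k) ih

namespace Nat.Partition

noncomputable def multichooseWeight (a : ℕ → ℕ) {n : ℕ} (μ : n.Partition) : ℕ :=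
  μ.parts.toFinsupp.prod fun i m ↦ (a i).multichoose m

variable {R : Type*} [CommRing R]

theorem hasProd_expand_invOneSubPow [TopologicalSpace R] [T2Space R] (a : ℕ → ℕ) :
    HasProd (fun i ↦ expand (i + 1) i.succ_ne_zero (invOneSubPow R (a (i + 1))).val)
      (genFun fun i m ↦ ((a i).multichoose m : R)) := by
  have hfactor (i : ℕ) : expand (i + 1) i.succ_ne_zero (invOneSubPow R (a (i + 1))).val =
      1 + ∑' j, ((a (i + 1)).multichoose (j + 1) : R) • X ^ ((i + 1) * (j + 1)) := by
    simp [expand_eq_C_add_tsum, ← coeff_zero_eq_constantCoeff_apply, coeff_invOneSubPow_val]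
  simpa only [hfactor] using hasProd_genFun (fun i m ↦ ((a i).multichoose m : R))

theorem coeff_genFun_multichoose (a : ℕ → ℕ) (n : ℕ) :
    coeff n (genFun fun i m ↦ ((a i).multichoose m : R)) =
      ((∑ μ : n.Partition, μ.multichooseWeight a : ℕ) : R) := by
  simp [multichooseWeight, Finsupp.prod]

theorem prod_one_sub_X_pow_pow_mul_prod_expand_invOneSubPow (a : ℕ → ℕ) (N : ℕ) :
    (∏ i ∈ Icc 1 N, (1 - X ^ i) ^ a i) *
      ∏ i ∈ range N, expand (i + 1) i.succ_ne_zero (invOneSubPow R (a (i + 1))).val = 1 := by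
  have hshift : ∏ i ∈ Icc 1 N, (1 - X ^ i : R⟦X⟧) ^ a i =
      ∏ i ∈ range N, (1 - X ^ (i + 1) : R⟦X⟧) ^ a (i + 1) := by
    rw [range_eq_Ico, prod_Ico_add' (fun i ↦ (1 - X ^ i : R⟦X⟧) ^ a i), zero_add,
      Ico_add_one_right_eq_Icc]
  rw [hshift, ← prod_mul_distrib]
  exact prod_eq_one fun i _ ↦ by
    rw [mul_comm]; exact expand_invOneSubPow_mul_one_sub_X_pow_pow _ _ _

open Filter Topology in
theorem eq_sum_multichooseWeight_of_mul_prod (a : ℕ → ℕ) (p : ℕ → R)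
    (hp : ∀ N k : ℕ, k ≤ N →
      coeff k (PowerSeries.mk p * ∏ i ∈ Icc 1 N, (1 - X ^ i) ^ a i) = if k = 0 then 1 else 0)
    (n : ℕ) :
    p n = ((∑ μ : n.Partition, μ.multichooseWeight a : ℕ) : R) := by
  -- The statement involves no topology; the discrete one serves to pass to the limit in
  -- `hasProd_genFun`.
  let _ : TopologicalSpace R := ⊥
  have : DiscreteTopology R := ⟨rfl⟩
  have hlim : Tendsto (fun N ↦ coeff n
        (∏ i ∈ range N, expand (i + 1) i.succ_ne_zero (invOneSubPow R (a (i + 1))).val))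
      atTop (𝓝 (coeff n (genFun fun i m ↦ ((a i).multichoose m : R)))) :=
    ((WithPiTopology.continuous_coeff R n).tendsto _).comp
      ((hasProd_expand_invOneSubPow a).comp tendsto_finset_range)
  have hstable : ∀ N ≥ n, p n =
      coeff n (∏ i ∈ range N, expand (i + 1) i.succ_ne_zero (invOneSubPow R (a (i + 1))).val) :=
    fun N hN ↦ (coeff_mk n p).symm.trans <|
      coeff_eq_of_coeff_mul_eq_coeff_one (prod_one_sub_X_pow_pow_mul_prod_expand_invOneSubPow a N)
        (fun k hk ↦ by rw [hp N k hk, coeff_one]) hN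
  rw [← coeff_genFun_multichoose]
  exact tendsto_nhds_unique (tendsto_const_nhds.congr' (eventually_atTop.2 ⟨n, hstable⟩)) hlim

def replicateOfDvd {n k : ℕ} (hk : 0 < k) (h : k ∣ n) : n.Partition where
  parts := Multiset.replicate (n / k) k
  parts_pos hi := Multiset.eq_of_mem_replicate hi ▸ hk
  parts_sum := by rw [Multiset.sum_replicate, smul_eq_mul, Nat.div_mul_cancel h]

theorem multichooseWeight_replicateOfDvd (a : ℕ → ℕ) {n k : ℕ} (hk : 0 < k) (h : k ∣ n) :
    (replicateOfDvd hk h).multichooseWeight a = (a k).multichoose (n / k) := by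
  have hsingle : (Multiset.replicate (n / k) k).toFinsupp = Finsupp.single k (n / k) :=
    Multiset.toFinsupp_eq_iff.2 (by rw [Finsupp.toMultiset_single, Multiset.nsmul_singleton])
  rw [multichooseWeight, replicateOfDvd, hsingle]
  exact Finsupp.prod_single_index (Nat.multichoose_zero_right _)

theorem parts_prod_le_three_pow {n : ℕ} (μ : n.Partition) (h3 : 3 ∣ n) :
    μ.parts.prod ≤ 3 ^ (n / 3) := by
  obtain ⟨m, rfl⟩ := h3
  have h := μ.parts.prod_pow_three_le_three_pow_sum
  rw [μ.parts_sum, pow_mul'] at h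
  rw [Nat.mul_div_cancel_left m three_pos]
  exact (Nat.pow_le_pow_iff_left three_ne_zero).1 h

theorem multichooseWeight_pow_le (e : ℕ) {n : ℕ} (μ : n.Partition) :
    μ.multichooseWeight (· ^ e) ≤ μ.parts.prod ^ e := by
  classical
  rw [multichooseWeight, Finsupp.prod, Multiset.toFinsupp_support, prod_multiset_count,
    ← prod_pow]
  refine prod_le_prod' fun i _ ↦ ?_
  rw [Multiset.toFinsupp_apply, ← pow_mul, mul_comm, pow_mul]
  exact Nat.multichoose_le_pow _ _

theorem sum_multichooseWeight_le (e n : ℕ) (h3 : 3 ∣ n) :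
    ∑ μ : n.Partition, μ.multichooseWeight (· ^ e) ≤
      3 ^ (e * (n / 3)) * Fintype.card n.Partition := by
  refine (sum_le_card_nsmul _ _ _ fun μ _ ↦ (multichooseWeight_pow_le e μ).trans ?_).trans_eq
    (by rw [Finset.card_univ, smul_eq_mul, mul_comm])
  rw [mul_comm, pow_mul]
  exact Nat.pow_le_pow_left (parts_prod_le_three_pow μ h3) e

theorem pow_lt_factorial_mul_sum_multichooseWeight (e n : ℕ) (hn : 3 ≤ n) (h3 : 3 ∣ n) :
    3 ^ (e * (n / 3)) < (∑ μ : n.Partition, μ.multichooseWeight (· ^ e)) * (n / 3)! := by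
  set ones := replicateOfDvd one_pos (one_dvd n)
  set threes := replicateOfDvd three_pos h3
  have hne : threes ≠ ones := by
    intro h
    have h1 : 1 ∈ ones.parts := Multiset.mem_replicate.2 ⟨by omega, rfl⟩
    rw [← h] at h1
    exact absurd (Multiset.eq_of_mem_replicate h1) (by norm_num)
  have hpair : threes.multichooseWeight (· ^ e) + ones.multichooseWeight (· ^ e) ≤
      ∑ μ : n.Partition, μ.multichooseWeight (· ^ e) := by
    rw [← sum_pair hne]
    exact sum_le_sum_of_subset (subset_univ _)
  rw [multichooseWeight_replicateOfDvd, multichooseWeight_replicateOfDvd, one_pow, Nat.div_one,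
    Nat.multichoose_one] at hpair
  calc 3 ^ (e * (n / 3)) = (3 ^ e) ^ (n / 3) := pow_mul 3 e (n / 3)
    _ ≤ (n / 3)! * (3 ^ e).multichoose (n / 3) := Nat.pow_le_factorial_mul_multichoose _ _
    _ < ((3 ^ e).multichoose (n / 3) + 1) * (n / 3)! := by
      rw [mul_comm]; exact Nat.mul_lt_mul_of_pos_right (Nat.lt_succ_self _) (Nat.factorial_pos _)
    _ ≤ (∑ μ : n.Partition, μ.multichooseWeight (· ^ e)) * (n / 3)! :=
      Nat.mul_le_mul_right _ hpair

end Nat.Partition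

theorem pd_bounds_mod_zero_general (d : ℕ) (p : ℕ → ℚ) (hp : IsPdSeries d p)
    (n : ℕ) (hn : 2 ≤ n) (h3 : n % 3 = 0) :
    (3 : ℚ) ^ ((d - 1) * (n / 3)) / (Nat.factorial (n / 3) : ℚ) < p n ∧
    p n ≤ (3 : ℚ) ^ ((d - 1) * (n / 3)) * (Fintype.card (Nat.Partition n) : ℚ) := by
  have h3 : 3 ∣ n := Nat.dvd_of_mod_eq_zero h3
  rw [Nat.Partition.eq_sum_multichooseWeight_of_mul_prod (· ^ (d - 1)) p hp n]
  constructor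
  · rw [div_lt_iff₀ (by positivity)]
    exact_mod_cast Nat.Partition.pow_lt_factorial_mul_sum_multichooseWeight (d - 1) n (by omega) h3
  · exact_mod_cast Nat.Partition.sum_multichooseWeight_le (d - 1) n h3

/-- Bounds for `p_d(n)` when `n ≡ 0 (mod 3)`. -/
theorem pd_bounds_mod_zero (d : ℕ) (hd : 1 ≤ d) (p : ℕ → ℚ) (hp : IsPdSeries d p)
    (n : ℕ) (hn : 2 ≤ n) (h3 : n % 3 = 0) :
    (3 : ℚ) ^ ((d - 1) * (n / 3)) / (Nat.factorial (n / 3) : ℚ) < p n ∧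
    p n ≤ (3 : ℚ) ^ ((d - 1) * (n / 3)) * (Fintype.card (Nat.Partition n) : ℚ) :=
  pd_bounds_mod_zero_general d p hp n hn h3
end

section
/- Let n ≥ 6 with n ≡ 0 (mod 3). If d ≥ 1 + 2n·(ln 2 + ln(n/3)/3)/ln(9/8), then p_d(n)² > p_d(n-1)·p_d(n+1); that is, p_d is log-concave at n. -/
open PowerSeries Finset

/-!
Write `q = d - 1`. For `k ≤ N`, `p k` is the `k`-th coefficient of
`P = ∏_{j=1}^N (1 - X^j)^(-j^q) = ∏_j (∑_k X^(jk))^(j^q)`, a series with nonnegative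
coefficients. Reading `a ≤ b` coefficientwise, each geometric factor `G` satisfies
`G = 1 + X^j G`, and hence `P ≤ 1 + (∑_j j^q X^j) P`, i.e. `p m ≤ ∑_{j=1}^m j^q p (m - j)`.
If `R m` is the largest product of the parts of a partition of `m`, then `j R (m - j) ≤ R m`,
and induction gives `p m ≤ 2^(m-1) R(m)^q`. On the other side, keeping only the factor `j = 3`
of `P` gives `p (3s) ≥ C(3^q + s - 1, s) ≥ 3^(qs) / s!`.

For `n = 3s` one has `R (n - 1) R (n + 1) = 8 * 9^(s-1)`, so
`p (n-1) p (n+1) ≤ 2^(2n-2) 8^q 9^(q(s-1))`, while `p n ^ 2 ≥ 9^(qs) / s!^2`. After taking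
logarithms, the hypothesis on `d` says `2^(2n) s^(2s) 8^q ≤ 9^q`, and `s! ≤ s^s` closes the gap.
-/

open scoped Nat

namespace PdLogConcave

section Cone

variable {R ι : Type*} [CommRing R] (P : Subsemiring R) (s : Finset ι) {f g : ι → R}

theorem prod_sub_one_mem (hf : ∀ i ∈ s, f i - 1 ∈ P) : ∏ i ∈ s, f i - 1 ∈ P := by
  classical
  induction s using Finset.induction_on with
  | empty => simp [zero_mem]
  | insert a s ha ih =>
    have hfa := hf a (mem_insert_self a s)
    have hs := ih fun i hi => hf i (mem_insert_of_mem hi)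
    rw [prod_insert ha, show f a * ∏ i ∈ s, f i - 1 =
      (f a - 1) * (∏ i ∈ s, f i - 1) + (f a - 1) + (∏ i ∈ s, f i - 1) by ring]
    exact add_mem (add_mem (mul_mem hfa hs) hfa) hs

theorem one_add_sum_mul_prod_sub_prod_mem (hf : ∀ i ∈ s, f i - 1 ∈ P) (hg : ∀ i ∈ s, g i ∈ P)
    (hfg : ∀ i ∈ s, 1 + g i * f i - f i ∈ P) :
    1 + (∑ i ∈ s, g i) * ∏ i ∈ s, f i - ∏ i ∈ s, f i ∈ P := by
  classical
  induction s using Finset.induction_on with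
  | empty => simp [zero_mem]
  | insert a s ha ih =>
    have hfa : f a ∈ P := by simpa using add_mem (hf a (mem_insert_self a s)) (one_mem P)
    have hprod := prod_sub_one_mem P s fun i hi => hf i (mem_insert_of_mem hi)
    have hsum := ih (fun i hi => hf i (mem_insert_of_mem hi))
      (fun i hi => hg i (mem_insert_of_mem hi)) (fun i hi => hfg i (mem_insert_of_mem hi))
    set A := ∏ i ∈ s, f i
    set D := ∑ i ∈ s, g i
    rw [sum_insert ha, prod_insert ha, show 1 + (g a + D) * (f a * A) - f a * A =
      (1 + g a * f a - f a) + g a * f a * (A - 1) + f a * (1 + D * A - A) by ring]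
    exact add_mem (add_mem (hfg a (mem_insert_self a s))
      (mul_mem (mul_mem (hg a (mem_insert_self a s)) hfa) hprod)) (mul_mem hfa hsum)

end Cone

section NonnegCoeffs

variable {R : Type*} [CommSemiring R] [PartialOrder R] [IsOrderedRing R]

def nonnegCoeffs : Subsemiring R⟦X⟧ where
  carrier := {f | ∀ n, 0 ≤ coeff n f}
  zero_mem' _ := by simp
  one_mem' n := by rw [coeff_one]; split_ifs <;> simp
  add_mem' hf hg n := by rw [map_add]; exact add_nonneg (hf n) (hg n)
  mul_mem' hf hg n := by rw [coeff_mul]; exact sum_nonneg fun x _ => mul_nonneg (hf _) (hg _)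

theorem X_mem_nonnegCoeffs : (X : R⟦X⟧) ∈ nonnegCoeffs := fun n => by
  rw [coeff_X]; split_ifs <;> simp

end NonnegCoeffs

section GeomSeries

variable (R : Type*) [CommRing R]

noncomputable def geomSeries (j : ℕ) : R⟦X⟧ := mk fun k => if j ∣ k then 1 else 0

variable {R} {j : ℕ}

theorem geomSeries_eq_expand (hj : j ≠ 0) : geomSeries R j = expand j hj (mk 1) := by
  ext k
  rw [geomSeries, coeff_mk, coeff_expand]
  simp

theorem geomSeries_mul_one_sub_X_pow (hj : j ≠ 0) : geomSeries R j * (1 - X ^ j) = 1 := by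
  rw [geomSeries_eq_expand hj, ← expand_X j hj, ← map_one (expand j hj), ← map_sub, ← map_mul,
    mk_one_mul_one_sub_eq_one]

theorem geomSeries_sub_one (hj : j ≠ 0) : geomSeries R j - 1 = X ^ j * geomSeries R j := by
  linear_combination geomSeries_mul_one_sub_X_pow (R := R) hj

theorem coeff_mul_geomSeries_pow (hj : j ≠ 0) (M s : ℕ) :
    coeff (j * s) (geomSeries R j ^ (M + 1)) = (M + s).choose s := by
  rw [geomSeries_eq_expand hj, ← map_pow, mk_one_pow_eq_mk_choose_add, coeff_expand_mul, coeff_mk,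
    Nat.choose_symm_add]

variable [PartialOrder R] [IsOrderedRing R]

theorem geomSeries_mem_nonnegCoeffs (j : ℕ) : geomSeries R j ∈ nonnegCoeffs := fun k => by
  rw [geomSeries, coeff_mk]
  split_ifs <;> simp

theorem geomSeries_sub_one_mem (hj : j ≠ 0) : geomSeries R j - 1 ∈ nonnegCoeffs := by
  rw [geomSeries_sub_one hj]
  exact mul_mem (pow_mem X_mem_nonnegCoeffs j) (geomSeries_mem_nonnegCoeffs j)

theorem geomSeries_pow_sub_one_mem (hj : j ≠ 0) (M : ℕ) :
    geomSeries R j ^ M - 1 ∈ nonnegCoeffs := by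
  simpa using prod_sub_one_mem nonnegCoeffs (range M) (f := fun _ => geomSeries R j)
    fun _ _ => geomSeries_sub_one_mem hj

theorem one_add_smul_mul_geomSeries_pow_sub_mem (hj : j ≠ 0) (M : ℕ) :
    1 + (M • X ^ j) * geomSeries R j ^ M - geomSeries R j ^ M ∈ nonnegCoeffs := by
  have h := one_add_sum_mul_prod_sub_prod_mem nonnegCoeffs (range M)
    (f := fun _ => geomSeries R j) (g := fun _ => X ^ j) (fun _ _ => geomSeries_sub_one_mem hj)
    (fun _ _ => pow_mem X_mem_nonnegCoeffs j) fun _ _ => by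
      rw [show 1 + X ^ j * geomSeries R j - geomSeries R j = 0 by
        linear_combination -geomSeries_sub_one (R := R) hj]
      exact zero_mem _
  rwa [sum_const, prod_const, card_range] at h

end GeomSeries

section MaxPartProd

/-- The largest product of the parts of a partition of `m`: use parts `3`, and a `2` or a `4`
for the remainder. -/
def maxPartProd : ℕ → ℕ
  | 0 => 1
  | 1 => 1
  | 2 => 2
  | 3 => 3
  | 4 => 4
  | m + 5 => 3 * maxPartProd (m + 2)

theorem maxPartProd_add_three {m : ℕ} (hm : 2 ≤ m) :
    maxPartProd (m + 3) = 3 * maxPartProd m := by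
  obtain ⟨k, rfl⟩ := Nat.exists_eq_add_of_le' hm
  rfl

theorem maxPartProd_three_mul_add_two (t : ℕ) : maxPartProd (3 * t + 2) = 2 * 3 ^ t := by
  induction t with
  | zero => rfl
  | succ t ih =>
    rw [show 3 * (t + 1) + 2 = 3 * t + 2 + 3 by ring, maxPartProd_add_three (by omega), ih]
    ring

theorem maxPartProd_three_mul_add_four (t : ℕ) : maxPartProd (3 * t + 4) = 4 * 3 ^ t := by
  induction t with
  | zero => rfl
  | succ t ih =>
    rw [show 3 * (t + 1) + 4 = 3 * t + 4 + 3 by ring, maxPartProd_add_three (by omega), ih]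
    ring

theorem mul_maxPartProd_sub_le {m j : ℕ} (hj : 1 ≤ j) (hjm : j ≤ m) :
    j * maxPartProd (m - j) ≤ maxPartProd m := by
  induction m using Nat.strong_induction_on generalizing j with
  | _ m ih =>
    by_cases hm : m < 9
    · interval_cases m <;> interval_cases j <;> simp [maxPartProd]
    obtain ⟨m, rfl⟩ : ∃ k, m = k + 3 := ⟨m - 3, by omega⟩
    rw [maxPartProd_add_three (by omega)]
    rcases le_or_gt j 4 with hj4 | hj4
    · have := ih m (by omega) hj (by omega)
      rw [show m + 3 - j = m - j + 3 by omega, maxPartProd_add_three (by omega)]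
      linarith
    · have := ih m (by omega) (j := j - 3) (by omega) (by omega)
      rw [show m - (j - 3) = m + 3 - j by omega] at this
      calc j * maxPartProd (m + 3 - j) ≤ 3 * (j - 3) * maxPartProd (m + 3 - j) :=
            Nat.mul_le_mul_right _ (by omega)
        _ ≤ 3 * maxPartProd m := by rw [mul_assoc]; exact Nat.mul_le_mul_left 3 this

theorem sum_Icc_two_pow_sub_sub_one {m : ℕ} (hm : 1 ≤ m) :
    ∑ j ∈ Icc 1 m, (2 : ℚ) ^ (m - j - 1) = 2 ^ (m - 1) := by
  rw [← Ico_add_one_right_eq_Icc, sum_Ico_reflect (fun i => (2 : ℚ) ^ (i - 1)) _ le_rfl,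
    Nat.add_sub_cancel, Nat.sub_self, ← range_eq_Ico]
  induction m, hm using Nat.le_induction with
  | base => simp
  | succ m hm ih =>
    rw [sum_range_succ, ih, ← two_mul, ← pow_succ']
    congr 1
    omega

theorem le_two_pow_mul_maxPartProd_pow {a : ℕ → ℚ} {q : ℕ} (h0 : a 0 ≤ 1)
    (ha : ∀ m, 1 ≤ m → a m ≤ ∑ j ∈ Icc 1 m, (j : ℚ) ^ q * a (m - j)) (m : ℕ) :
    a m ≤ 2 ^ (m - 1) * (maxPartProd m : ℚ) ^ q := by
  induction m using Nat.strong_induction_on with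
  | _ m ih =>
    rcases Nat.eq_zero_or_pos m with rfl | hm
    · simpa [maxPartProd] using h0
    calc a m ≤ ∑ j ∈ Icc 1 m, (j : ℚ) ^ q * a (m - j) := ha m hm
      _ ≤ ∑ j ∈ Icc 1 m, 2 ^ (m - j - 1) * (maxPartProd m : ℚ) ^ q := by
        refine sum_le_sum fun j hj => ?_
        obtain ⟨hj1, hjm⟩ := mem_Icc.mp hj
        calc (j : ℚ) ^ q * a (m - j)
            ≤ j ^ q * (2 ^ (m - j - 1) * (maxPartProd (m - j) : ℚ) ^ q) := by
              gcongr
              exact ih _ (by omega)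
          _ = 2 ^ (m - j - 1) * ((j * maxPartProd (m - j) : ℕ) : ℚ) ^ q := by push_cast; ring
          _ ≤ 2 ^ (m - j - 1) * (maxPartProd m : ℚ) ^ q := by
              gcongr
              exact mul_maxPartProd_sub_le hj1 hjm
      _ = 2 ^ (m - 1) * (maxPartProd m : ℚ) ^ q := by
        rw [← sum_mul, sum_Icc_two_pow_sub_sub_one hm]

end MaxPartProd

section PdSeries

noncomputable def pdSeries (q N : ℕ) : ℚ⟦X⟧ := ∏ j ∈ Icc 1 N, geomSeries ℚ j ^ j ^ q

variable {q N : ℕ}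

theorem pdSeries_mul_prod_one_sub_X_pow :
    pdSeries q N * ∏ j ∈ Icc 1 N, (1 - X ^ j) ^ j ^ q = 1 := by
  rw [pdSeries, ← prod_mul_distrib]
  refine prod_eq_one fun j hj => ?_
  rw [← mul_pow, geomSeries_mul_one_sub_X_pow (by grind), one_pow]

theorem IsPdSeries.eq_coeff_pdSeries {d : ℕ} {p : ℕ → ℚ} (hp : IsPdSeries d p) {k : ℕ}
    (hk : k ≤ N) : p k = coeff k (pdSeries (d - 1) N) := by
  set G : ℚ⟦X⟧ := ∏ j ∈ Icc 1 N, (1 - X ^ j) ^ j ^ (d - 1)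
  have htrunc : trunc (N + 1) (mk p * G) = trunc (N + 1) 1 := by
    ext i
    rw [coeff_trunc, coeff_trunc]
    split_ifs with hi
    · rw [hp N i (by omega), coeff_one]
    · rfl
  have h : trunc (N + 1) (mk p) = trunc (N + 1) (pdSeries (d - 1) N) :=
    calc trunc (N + 1) (mk p)
        = trunc (N + 1) ((trunc (N + 1) (mk p * G) : ℚ⟦X⟧) * pdSeries (d - 1) N) := by
          rw [trunc_trunc_mul, mul_assoc, mul_comm G, pdSeries_mul_prod_one_sub_X_pow, mul_one]
      _ = trunc (N + 1) (pdSeries (d - 1) N) := by rw [htrunc, trunc_trunc_mul, one_mul]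
  simpa [coeff_trunc, Nat.lt_succ_of_le hk] using congr(Polynomial.coeff $h k)

theorem coeff_zero_pdSeries : coeff 0 (pdSeries q N) = 1 := by
  simp [pdSeries, geomSeries, coeff_zero_eq_constantCoeff, map_prod]

theorem pdSeries_mem_nonnegCoeffs : pdSeries q N ∈ nonnegCoeffs :=
  prod_mem fun j _ => pow_mem (geomSeries_mem_nonnegCoeffs j) _

theorem one_add_sum_mul_pdSeries_sub_mem :
    1 + (∑ j ∈ Icc 1 N, (j ^ q) • X ^ j) * pdSeries q N - pdSeries q N ∈ nonnegCoeffs :=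
  one_add_sum_mul_prod_sub_prod_mem nonnegCoeffs (Icc 1 N) (f := fun j => geomSeries ℚ j ^ j ^ q)
    (fun j hj => geomSeries_pow_sub_one_mem (by grind) _)
    (fun j _ => nsmul_mem (pow_mem X_mem_nonnegCoeffs j) _)
    (fun j hj => one_add_smul_mul_geomSeries_pow_sub_mem (by grind) _)

theorem coeff_pdSeries_le_sum {m : ℕ} (hm : 1 ≤ m) :
    coeff m (pdSeries q N) ≤ ∑ j ∈ Icc 1 m, (j : ℚ) ^ q * coeff (m - j) (pdSeries q N) := by
  have h := one_add_sum_mul_pdSeries_sub_mem (q := q) (N := N) m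
  simp only [map_sub, map_add, coeff_one, if_neg (Nat.one_le_iff_ne_zero.mp hm), zero_add, sum_mul,
    map_sum, smul_mul_assoc, map_nsmul, coeff_X_pow_mul'] at h
  simp only [nsmul_eq_mul, Nat.cast_pow, mul_ite, mul_zero, ← sum_filter, sub_nonneg] at h
  refine h.trans (sum_le_sum_of_subset_of_nonneg (fun j => ?_) fun j _ _ => ?_)
  · simp only [mem_filter, mem_Icc]
    omega
  · exact mul_nonneg (by positivity) (pdSeries_mem_nonnegCoeffs _)

theorem coeff_pdSeries_le (m : ℕ) :
    coeff m (pdSeries q N) ≤ 2 ^ (m - 1) * (maxPartProd m : ℚ) ^ q :=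
  le_two_pow_mul_maxPartProd_pow coeff_zero_pdSeries.le (fun _ => coeff_pdSeries_le_sum) m

theorem choose_le_coeff_pdSeries {j : ℕ} (hj : j ∈ Icc 1 N) (s : ℕ) :
    ((j ^ q + s - 1).choose s : ℚ) ≤ coeff (j * s) (pdSeries q N) := by
  have hj0 : j ≠ 0 := by grind
  obtain ⟨M, hM⟩ := Nat.exists_eq_add_one.mpr (pow_pos (Nat.pos_of_ne_zero hj0) q)
  have hrest : geomSeries ℚ j ^ j ^ q * ∏ i ∈ (Icc 1 N).erase j, geomSeries ℚ i ^ i ^ q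
      - geomSeries ℚ j ^ j ^ q ∈ nonnegCoeffs := by
    rw [← mul_sub_one]
    exact mul_mem (pow_mem (geomSeries_mem_nonnegCoeffs j) _)
      (prod_sub_one_mem _ _ fun i hi => geomSeries_pow_sub_one_mem (by grind) _)
  rw [pdSeries, ← mul_prod_erase _ _ hj]
  refine le_of_sub_nonneg ?_
  simpa [hM, coeff_mul_geomSeries_pow hj0] using hrest (j * s)

theorem pow_pow_le_factorial_mul_coeff_pdSeries {j : ℕ} (hj : j ∈ Icc 1 N) (s : ℕ) :
    ((j ^ q) ^ s : ℚ) ≤ s ! * coeff (j * s) (pdSeries q N) :=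
  calc ((j ^ q) ^ s : ℚ) ≤ s ! * ((j ^ q + s - 1).choose s : ℕ) := by
        exact_mod_cast (Nat.pow_succ_le_ascFactorial _ _).trans_eq
          (Nat.ascFactorial_eq_factorial_mul_choose' _ _)
    _ ≤ s ! * coeff (j * s) (pdSeries q N) := by gcongr; exact choose_le_coeff_pdSeries hj s

end PdSeries

section Numerics

theorem two_pow_mul_pow_mul_eight_pow_le {d t : ℕ}
    (hd : (d : ℝ) ≥ 1 + 2 * ((3 * t + 3 : ℕ) : ℝ) *
      (Real.log 2 + Real.log (((3 * t + 3 : ℕ) : ℝ) / 3) / 3) / Real.log (9 / 8)) :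
    2 ^ (6 * t + 6) * (t + 1) ^ (2 * t + 2) * 8 ^ (d - 1) ≤ 9 ^ (d - 1) := by
  have hlog98 : 0 < Real.log (9 / 8) := Real.log_pos (by norm_num)
  have hlog : 0 ≤ Real.log (t + 1) := Real.log_nonneg (by simp)
  rw [show ((3 * t + 3 : ℕ) : ℝ) / 3 = t + 1 by push_cast; ring] at hd
  have hd1 : 1 ≤ d := by
    have : 0 ≤ 2 * ((3 * t + 3 : ℕ) : ℝ) * (Real.log 2 + Real.log (t + 1) / 3) /
        Real.log (9 / 8) := by
      positivity
    exact_mod_cast (by linarith : (1 : ℝ) ≤ d)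
  have hq : 2 * ((3 * t + 3 : ℕ) : ℝ) * (Real.log 2 + Real.log (t + 1) / 3) ≤
      ((d - 1 : ℕ) : ℝ) * Real.log (9 / 8) := by
    rw [Nat.cast_sub hd1, Nat.cast_one, ← div_le_iff₀ hlog98]
    linarith
  rw [← Nat.cast_le (α := ℝ), ← Real.log_le_log_iff (by positivity) (by positivity)]
  push_cast
  rw [Real.log_mul (by positivity) (by positivity), Real.log_mul (by positivity) (by positivity),
    Real.log_pow, Real.log_pow, Real.log_pow, Real.log_pow,
    show (9 : ℝ) = 8 * (9 / 8) by norm_num, Real.log_mul (by norm_num) (by norm_num)]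
  push_cast at hq ⊢
  linarith

theorem mul_lt_sq_of_bounds {q t : ℕ} {x y z : ℚ} (hy0 : 0 ≤ y)
    (hx : x ≤ 2 ^ (3 * t + 1) * (2 * 3 ^ t) ^ q) (hy : y ≤ 2 ^ (3 * t + 3) * (4 * 3 ^ t) ^ q)
    (hz : (3 ^ q) ^ (t + 1) ≤ ((t + 1)! : ℚ) * z)
    (hkey : 2 ^ (6 * t + 6) * ((t : ℚ) + 1) ^ (2 * t + 2) * 8 ^ q ≤ 9 ^ q) : x * y < z ^ 2 := by
  have hfact : ((t + 1)! : ℚ) ^ 2 ≤ ((t : ℚ) + 1) ^ (2 * t + 2) := by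
    rw [show 2 * t + 2 = (t + 1) * 2 by ring, pow_mul]
    exact_mod_cast Nat.pow_le_pow_left (Nat.factorial_le_pow _) 2
  have h8 : (8 : ℚ) ^ q = 2 ^ q * 4 ^ q := by rw [← mul_pow]; norm_num
  have h9 : (9 : ℚ) ^ q = 3 ^ q * 3 ^ q := by rw [← mul_pow]; norm_num
  set U : ℚ := 2 ^ (6 * t + 4) * 8 ^ q * ((3 ^ t) ^ q) ^ 2 with hU_def
  have hxy : x * y ≤ U := by
    refine (mul_le_mul hx hy hy0 (by positivity)).trans_eq ?_
    rw [hU_def, h8]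
    ring
  have hU : 0 < U * ((t : ℚ) + 1) ^ (2 * t + 2) := by positivity
  refine lt_of_mul_lt_mul_right ?_ (sq_nonneg ((t + 1)! : ℚ))
  calc x * y * ((t + 1)! : ℚ) ^ 2 ≤ U * ((t : ℚ) + 1) ^ (2 * t + 2) := by gcongr
    _ < 2 ^ (6 * t + 6) * ((t : ℚ) + 1) ^ (2 * t + 2) * 8 ^ q * ((3 ^ t) ^ q) ^ 2 := by
        rw [show (2 : ℚ) ^ (6 * t + 6) = 2 ^ (6 * t + 4) * 4 by ring]
        linarith
    _ ≤ 9 ^ q * ((3 ^ t) ^ q) ^ 2 := by gcongr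
    _ = ((3 ^ q) ^ (t + 1)) ^ 2 := by rw [h9]; ring
    _ ≤ ((t + 1)! * z) ^ 2 := by gcongr
    _ = z ^ 2 * ((t + 1)! : ℚ) ^ 2 := by ring

end Numerics

end PdLogConcave

open PdLogConcave

/-- Log-concavity of `p_d` at `n ≡ 0 (mod 3)`, `n ≥ 6`, for large `d`. -/
theorem pd_log_concave_mod_zero (d : ℕ) (p : ℕ → ℚ) (hp : IsPdSeries d p)
    (n : ℕ) (hn : 6 ≤ n) (h3 : n % 3 = 0)
    (hd : (d : ℝ) ≥ 1 + 2 * (n : ℝ) * (Real.log 2 + Real.log ((n : ℝ) / 3) / 3) / Real.log (9 / 8)) :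
    p n ^ 2 > p (n - 1) * p (n + 1) := by
  obtain ⟨t, rfl⟩ : ∃ t, n = 3 * t + 3 := ⟨n / 3 - 1, by omega⟩
  set q := d - 1
  have hcoeff {k : ℕ} (hk : k ≤ 3 * t + 4) : p k = coeff k (pdSeries q (3 * t + 4)) :=
    hp.eq_coeff_pdSeries hk
  have hx : p (3 * t + 2) ≤ 2 ^ (3 * t + 1) * (2 * 3 ^ t) ^ q := by
    have h := coeff_pdSeries_le (q := q) (N := 3 * t + 4) (3 * t + 2)
    rw [maxPartProd_three_mul_add_two, show 3 * t + 2 - 1 = 3 * t + 1 by omega] at h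
    rw [hcoeff (by omega)]
    exact_mod_cast h
  have hy : p (3 * t + 4) ≤ 2 ^ (3 * t + 3) * (4 * 3 ^ t) ^ q := by
    have h := coeff_pdSeries_le (q := q) (N := 3 * t + 4) (3 * t + 4)
    rw [maxPartProd_three_mul_add_four, show 3 * t + 4 - 1 = 3 * t + 3 by omega] at h
    rw [hcoeff le_rfl]
    exact_mod_cast h
  have hy0 : 0 ≤ p (3 * t + 4) := by
    rw [hcoeff le_rfl]
    exact pdSeries_mem_nonnegCoeffs _
  have hz : ((3 ^ q) ^ (t + 1) : ℚ) ≤ (t + 1)! * p (3 * t + 3) := by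
    rw [hcoeff (k := 3 * t + 3) (by omega), show 3 * t + 3 = 3 * (t + 1) by ring]
    exact_mod_cast pow_pow_le_factorial_mul_coeff_pdSeries (by simp) _
  have hkey : 2 ^ (6 * t + 6) * ((t : ℚ) + 1) ^ (2 * t + 2) * 8 ^ q ≤ 9 ^ q := by
    exact_mod_cast two_pow_mul_pow_mul_eight_pow_le hd
  rw [show 3 * t + 3 - 1 = 3 * t + 2 by omega]
  exact mul_lt_sq_of_bounds hy0 hx hy hz hkey
end

section
/- For every d ≥ 1 one has p_d(5) = 6^{d-1} + 5^{d-1} + p_d(4), where p_d(4) = (3/2)·4^{d-1} + 3^{d-1} + (3/2)·2^{d-1} + 1. -/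
open PowerSeries Finset

/-!
Multiplying the series `∑ p k q^k` by the finite product `∏_{n ≤ 5} (1 - q^n)^(n^(d-1))`
gives `1` up to degree 5. Expanding each factor binomially, the coefficients of that product
up to `q^5` are explicit in `2^(d-1)`, …, `5^(d-1)`, and the resulting triangular system
determines `p 0, …, p 5`.
-/

theorem coeff_one_sub_X_pow_pow {R : Type*} [CommRing R] {m : ℕ} (hm : 0 < m) (s k : ℕ) :
    coeff k ((1 - X ^ m : R⟦X⟧) ^ s) =
      if m ∣ k then (-1) ^ (k / m) * (s.choose (k / m) : R) else 0 := by
  have hexp : (1 - X ^ m : R⟦X⟧) ^ s =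
      ∑ j ∈ range (s + 1), C ((-1) ^ j * (s.choose j : R)) * X ^ (m * j) := by
    rw [sub_eq_add_neg, add_comm, add_pow]
    refine sum_congr rfl fun j _ => ?_
    rw [one_pow, mul_one, neg_pow, ← pow_mul, map_mul, map_pow, map_neg, map_one, map_natCast]
    ring
  simp only [hexp, map_sum, coeff_C_mul, coeff_X_pow]
  split_ifs with hdvd
  · obtain ⟨j, rfl⟩ := hdvd
    rw [Nat.mul_div_cancel_left _ hm, sum_eq_single j]
    · simp
    · intro i _ hij
      simp [Nat.mul_left_cancel_iff hm, Ne.symm hij]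
    · intro hj
      rw [Nat.choose_eq_zero_of_lt (by simpa using hj)]
      simp
  · refine sum_eq_zero fun j _ => ?_
    rw [if_neg fun h : k = m * j => hdvd (h ▸ dvd_mul_right m j), mul_zero]

theorem coeff_prod_Icc_one_five {R : Type*} [CommRing R] (s : ℕ → ℕ) (hs : s 1 = 1) :
    let P : R⟦X⟧ := ∏ n ∈ Icc 1 5, (1 - X ^ n) ^ s n
    coeff 0 P = 1 ∧ coeff 1 P = -1 ∧ coeff 2 P = -s 2 ∧ coeff 3 P = s 2 - s 3 ∧
      coeff 4 P = (s 2).choose 2 + s 3 - s 4 ∧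
      coeff 5 P = s 2 * s 3 - (s 2).choose 2 + s 4 - s 5 := by
  intro P
  simp only [P, prod_Icc_succ_top (show 1 ≤ 5 by norm_num),
    prod_Icc_succ_top (show 1 ≤ 4 by norm_num), prod_Icc_succ_top (show 1 ≤ 3 by norm_num),
    prod_Icc_succ_top (show 1 ≤ 2 by norm_num),
    Icc_self, prod_singleton, hs, pow_one, coeff_mul, Nat.sum_antidiagonal_eq_sum_range_succ_mk,
    sum_range_succ, sum_range_zero,
    coeff_one_sub_X_pow_pow (R := R) (by norm_num : 0 < 2),
    coeff_one_sub_X_pow_pow (R := R) (by norm_num : 0 < 3),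
    coeff_one_sub_X_pow_pow (R := R) (by norm_num : 0 < 4),
    coeff_one_sub_X_pow_pow (R := R) (by norm_num : 0 < 5)]
  norm_num [coeff_one, coeff_X]
  refine ⟨?_, ?_, ?_⟩ <;> ring

theorem IsPdSeries.sum_range_mul_coeff {d : ℕ} {p : ℕ → ℚ} (hp : IsPdSeries d p) {N k : ℕ}
    (hk : k ≤ N) :
    ∑ i ∈ range (k + 1),
        p i * coeff (k - i) (∏ n ∈ Icc 1 N, (1 - X ^ n : ℚ⟦X⟧) ^ (n ^ (d - 1))) =
      if k = 0 then 1 else 0 := by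
  rw [← hp N k hk, coeff_mul, Nat.sum_antidiagonal_eq_sum_range_succ_mk]
  simp [coeff_mk]

theorem pd_five_general (d : ℕ) (p : ℕ → ℚ) (hp : IsPdSeries d p) :
    p 5 = (6 : ℚ) ^ (d - 1) + (5 : ℚ) ^ (d - 1) + p 4 ∧
    p 4 = (3 / 2) * (4 : ℚ) ^ (d - 1) + (3 : ℚ) ^ (d - 1) + (3 / 2) * (2 : ℚ) ^ (d - 1) + 1 := by
  obtain ⟨f0, f1, f2, f3, f4, f5⟩ :=
    coeff_prod_Icc_one_five (R := ℚ) (fun n => n ^ (d - 1)) (one_pow _)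
  have E (k : ℕ) (hk : k ≤ 5) := hp.sum_range_mul_coeff hk
  have E0 := E 0 (by norm_num)
  have E1 := E 1 (by norm_num)
  have E2 := E 2 (by norm_num)
  have E3 := E 3 (by norm_num)
  have E4 := E 4 (by norm_num)
  have E5 := E 5 (by norm_num)
  simp only [sum_range_succ, sum_range_zero, f0, f1, f2, f3, f4, f5, Nat.cast_choose_two]
    at E0 E1 E2 E3 E4 E5
  norm_num at E0 E1 E2 E3 E4 E5
  have h1 : p 1 = 1 := by linear_combination E1 + E0
  rw [E0, h1] at E2
  have h2 : p 2 = 2 ^ (d - 1) + 1 := by linear_combination E2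
  rw [E0, h1, h2] at E3
  have h3 : p 3 = 2 ^ (d - 1) + 3 ^ (d - 1) + 1 := by linear_combination E3
  rw [E0, h1, h2, h3] at E4 E5
  have h4 : (4 : ℚ) ^ (d - 1) = (2 ^ (d - 1)) ^ 2 := by
    rw [← pow_mul, mul_comm, pow_mul]; norm_num
  have h6 : (6 : ℚ) ^ (d - 1) = 2 ^ (d - 1) * 3 ^ (d - 1) := by rw [← mul_pow]; norm_num
  exact ⟨by linear_combination E5 - h6, by linear_combination E4 - h4 / 2⟩

/-- `p_d(5) = 6^(d-1) + 5^(d-1) + p_d(4)`. -/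
theorem pd_five (d : ℕ) (hd : 1 ≤ d) (p : ℕ → ℚ) (hp : IsPdSeries d p) :
    p 5 = (6 : ℚ) ^ (d - 1) + (5 : ℚ) ^ (d - 1) + p 4 ∧
    p 4 = (3 / 2) * (4 : ℚ) ^ (d - 1) + (3 : ℚ) ^ (d - 1) + (3 / 2) * (2 : ℚ) ^ (d - 1) + 1 :=
  pd_five_general d p hp
end
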